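/- A network N is a cluster network if and only if N is semi-regular, separated, and phylogenetic. -/

import Mathlib

namespace PhyloNet

/-- A (rooted) network on a set `X` of taxa: a finite directed acyclic graph with a
unique vertex of indegree 0 (the root), whose vertices of outdegree 0 (the leaves)
are exactly the elements of `X` (via the injection `leafEmb`). -/
structure Network (X : Type) where
  V : Type
  [fintypeV : Fintype V]
  E : V → V → Prop
  leafEmb : X → V
  leafEmb_inj : Function.Injective leafEmb
  acyclic : ∀ u v : V, E u v → ¬ Relation.ReflTransGen E v u
  root_unique : ∃! r : V, ∀ u : V, ¬ E u r
  leaf_iff : ∀ v : V, (∀ w : V, ¬ E v w) ↔ ∃ x : X, leafEmb x = v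

attribute [instance] Network.fintypeV

variable {X : Type}

namespace Network

/-- `reach u v` : there is a directed path (possibly trivial) from `u` to `v`,
i.e. `v ⪯ u`. -/
def reach (N : Network X) : N.V → N.V → Prop := Relation.ReflTransGen N.E

/-- The cluster of a vertex: the set of leaves reachable from it. -/
def cluster (N : Network X) (v : N.V) : Set X := {x | N.reach v (N.leafEmb x)}

/-- The clustering system of a network. -/
def CS (N : Network X) : Set (Set X) := Set.range N.cluster

noncomputable def inDeg (N : Network X) (v : N.V) : ℕ := {u | N.E u v}.ncard
noncomputable def outDeg (N : Network X) (v : N.V) : ℕ := {w | N.E v w}.ncard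

def IsHybrid (N : Network X) (v : N.V) : Prop := 1 < N.inDeg v
def IsTreeVertex (N : Network X) (v : N.V) : Prop := N.inDeg v ≤ 1
def IsLeaf (N : Network X) (v : N.V) : Prop := ∀ w : N.V, ¬ N.E v w

/-- The arc `(u,w)` is a shortcut: `w ≺ v` for some child `v ≠ w` of `u`. -/
def IsShortcut (N : Network X) (u w : N.V) : Prop :=
  N.E u w ∧ ∃ v : N.V, N.E u v ∧ v ≠ w ∧ N.reach v w

def ShortcutFree (N : Network X) : Prop := ∀ u w : N.V, ¬ N.IsShortcut u w

/-- Path-cluster comparability. -/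
def PCC (N : Network X) : Prop :=
  ∀ u v : N.V, (N.reach u v ∨ N.reach v u) ↔
    (N.cluster u ⊆ N.cluster v ∨ N.cluster v ⊆ N.cluster u)

def SemiRegular (N : Network X) : Prop := N.ShortcutFree ∧ N.PCC

/-- `N` is regular iff `v ↦ C(v)` is a digraph isomorphism onto the Hasse diagram
of `𝒞_N` (ordered by inclusion). -/
def Regular (N : Network X) : Prop :=
  Function.Injective N.cluster ∧
  ∀ u v : N.V, N.E u v ↔
    (N.cluster v ⊂ N.cluster u ∧
      ¬ ∃ w : N.V, N.cluster v ⊂ N.cluster w ∧ N.cluster w ⊂ N.cluster u)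

def Separated (N : Network X) : Prop := ∀ v : N.V, N.IsHybrid v → N.outDeg v = 1

def Phylogenetic (N : Network X) : Prop := ¬ ∃ v : N.V, N.outDeg v = 1 ∧ N.inDeg v ≤ 1

def Binary (N : Network X) : Prop :=
  (∀ v : N.V, N.IsTreeVertex v → (N.IsLeaf v ∨ N.outDeg v = 2)) ∧
  (∀ v : N.V, N.IsHybrid v → N.inDeg v = 2 ∧ N.outDeg v = 1)

def TreeChild (N : Network X) : Prop :=
  ∀ v : N.V, ¬ N.IsLeaf v → ∃ u : N.V, N.E v u ∧ N.inDeg u = 1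

/-- The underlying undirected (simple) graph of a network. -/
def UG (N : Network X) : SimpleGraph N.V where
  Adj u v := u ≠ v ∧ (N.E u v ∨ N.E v u)
  symm := ⟨fun _ _ h => ⟨Ne.symm h.1, Or.symm h.2⟩⟩
  loopless := ⟨fun _ h => h.1 rfl⟩

/-- A set of vertices is biconnected if it induces a connected undirected graph
with no cutvertex. -/
def IsBiconn (N : Network X) (B : Set N.V) : Prop :=
  (N.UG.induce B).Connected ∧ ∀ v ∈ B, (N.UG.induce (B \ {v})).Preconnected

/-- A block: a maximal biconnected set of vertices. -/
def IsBlock (N : Network X) (B : Set N.V) : Prop :=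
  N.IsBiconn B ∧ ∀ B' : Set N.V, B ⊆ B' → N.IsBiconn B' → B' = B

/-- The set `B` contains an undirected cycle (`B` is a non-trivial block when it is
a block). -/
def HasCycleIn (N : Network X) (B : Set N.V) : Prop :=
  ∃ (v : N.V) (c : N.UG.Walk v v), c.IsCycle ∧ ∀ w ∈ c.support, w ∈ B

/-- Level-1: each block contains at most one hybrid vertex that is not
`⪯`-maximal in the block. -/
def Level1 (N : Network X) : Prop :=
  ∀ B : Set N.V, N.IsBlock B →
    Set.Subsingleton {v : N.V | v ∈ B ∧ N.IsHybrid v ∧ ∃ u ∈ B, u ≠ v ∧ N.reach u v}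

/-- The set `B` (with the edges of the underlying undirected graph between its
members) is exactly an undirected cycle. -/
def IsCycleSet (N : Network X) (B : Set N.V) : Prop :=
  ∃ (v : N.V) (c : N.UG.Walk v v), c.IsCycle ∧ (∀ w : N.V, w ∈ c.support ↔ w ∈ B) ∧
    ∀ u w : N.V, (N.UG.Adj u w ∧ u ∈ B ∧ w ∈ B) ↔ s(u, w) ∈ c.edges

/-- A galled tree: every non-trivial block is an undirected cycle. -/
def GalledTree (N : Network X) : Prop :=
  ∀ B : Set N.V, N.IsBlock B → N.HasCycleIn B → N.IsCycleSet B

/-- Quasi-binary: hybrid vertices have indegree 2 and outdegree 1, and the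
`⪯`-maximal vertex of every non-trivial block has outdegree 2. -/
def QuasiBinary (N : Network X) : Prop :=
  (∀ v : N.V, N.IsHybrid v → N.inDeg v = 2 ∧ N.outDeg v = 1) ∧
  ∀ B : Set N.V, N.IsBlock B → N.HasCycleIn B →
    ∀ v ∈ B, (∀ u ∈ B, N.reach u v → u = v) → N.outDeg v = 2

/-- `LCA A`: the `⪯`-minimal vertices among the common ancestors of `A`. -/
def LCA (N : Network X) (A : Set X) : Set N.V :=
  {v : N.V | A ⊆ N.cluster v ∧ ∀ u : N.V, A ⊆ N.cluster u → N.reach v u → u = v}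

/-- An lca-network: every nonempty set of leaves has a unique least common
ancestor. -/
def LcaNetwork (N : Network X) : Prop :=
  ∀ A : Set X, A.Nonempty → ∃ v : N.V, N.LCA A = {v}

/-- A strong lca-network. -/
def StrongLca (N : Network X) : Prop :=
  N.LcaNetwork ∧
  ∀ A : Set X, A.Nonempty → ∃ x ∈ A, ∃ y ∈ A, N.LCA ({x, y} : Set X) = N.LCA A

/-- Cluster networks in the sense of Huson & Rupp. -/
def ClusterNetwork (N : Network X) : Prop :=
  N.PCC ∧
  (∀ u v : N.V, N.cluster u = N.cluster v ↔
    (u = v ∨ (N.IsHybrid v ∧ N.E v u) ∨ (N.IsHybrid u ∧ N.E u v))) ∧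
  (∀ u v : N.V, N.E v u →
    ¬ ∃ w : N.V, N.cluster u ⊂ N.cluster w ∧ N.cluster w ⊂ N.cluster v) ∧
  (∀ v : N.V, N.IsHybrid v →
    ∃ u : N.V, N.E v u ∧ (∀ w : N.V, N.E v w → w = u) ∧ N.IsTreeVertex u)

/-- The multiplicity of a cluster in the cluster multiset `𝓜_N`. -/
noncomputable def multiplicity (N : Network X) (C : Set X) : ℕ :=
  Nat.card {v : N.V // N.cluster v = C}

/-- Isomorphism of networks on the same leaf set `X`, fixing every leaf. -/
def Isomorphic (N N' : Network X) : Prop :=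
  ∃ φ : N.V ≃ N'.V, (∀ u v : N.V, N.E u v ↔ N'.E (φ u) (φ v)) ∧
    ∀ x : X, φ (N.leafEmb x) = N'.leafEmb x

end Network

/-- A clustering system on `X`. -/
def IsClusteringSystem {X : Type} (𝒞 : Set (Set X)) : Prop :=
  ∅ ∉ 𝒞 ∧ Set.univ ∈ 𝒞 ∧ ∀ x : X, {x} ∈ 𝒞

/-- Two sets overlap if `A ∩ B ∉ {∅, A, B}`. -/
def Overlap {X : Type} (A B : Set X) : Prop :=
  (A ∩ B).Nonempty ∧ A ∩ B ≠ A ∧ A ∩ B ≠ B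

/-- Closed (under pairwise nonempty intersections). -/
def IsClosedCS {X : Type} (𝒞 : Set (Set X)) : Prop :=
  ∀ A ∈ 𝒞, ∀ B ∈ 𝒞, (A ∩ B).Nonempty → A ∩ B ∈ 𝒞

/-- Property (L). -/
def PropertyL {X : Type} (𝒞 : Set (Set X)) : Prop :=
  ∀ C₁ ∈ 𝒞, ∀ C₂ ∈ 𝒞, ∀ C₃ ∈ 𝒞, Overlap C₁ C₂ → Overlap C₁ C₃ → C₁ ∩ C₂ = C₁ ∩ C₃

/-- Weak hierarchy. -/
def WeakHierarchy {X : Type} (𝒞 : Set (Set X)) : Prop :=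
  ∀ C₁ ∈ 𝒞, ∀ C₂ ∈ 𝒞, ∀ C₃ ∈ 𝒞,
    C₁ ∩ C₂ ∩ C₃ = C₁ ∩ C₂ ∨ C₁ ∩ C₂ ∩ C₃ = C₁ ∩ C₃ ∨
    C₁ ∩ C₂ ∩ C₃ = C₂ ∩ C₃ ∨ C₁ ∩ C₂ ∩ C₃ = ∅

/-- Property (N3O): no three distinct pairwise overlapping clusters. -/
def N3O {X : Type} (𝒞 : Set (Set X)) : Prop :=
  ¬ ∃ C₁ ∈ 𝒞, ∃ C₂ ∈ 𝒞, ∃ C₃ ∈ 𝒞,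
    C₁ ≠ C₂ ∧ C₁ ≠ C₃ ∧ C₂ ≠ C₃ ∧ Overlap C₁ C₂ ∧ Overlap C₁ C₃ ∧ Overlap C₂ C₃

/-- Property (2-Inc). -/
def TwoInc {X : Type} (𝒞 : Set (Set X)) : Prop :=
  ∀ C ∈ 𝒞,
    {A : Set X | A ∈ 𝒞 ∧ A ⊂ C ∧ ∀ B ∈ 𝒞, B ⊂ C → A ⊆ B → A = B}.ncard ≤ 2 ∧
    {A : Set X | A ∈ 𝒞 ∧ C ⊂ A ∧ ∀ B ∈ 𝒞, C ⊂ B → B ⊆ A → A = B}.ncard ≤ 2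

/-- The intersection closure: all nonempty intersections of nonempty subfamilies. -/
def interClosure {X : Type} (𝒞 : Set (Set X)) : Set (Set X) :=
  {A : Set X | A.Nonempty ∧ ∃ S : Set (Set X), S ⊆ 𝒞 ∧ S.Nonempty ∧ A = ⋂₀ S}

/-! If two distinct vertices `u ⪰ v` have the same cluster, let `c` be the child of `u` on a path
to `v`. Every child of `u` has its cluster inside `C(v) ⊆ C(c)`, so by (PCC) it is comparable with
`c`, and shortcut-freeness makes `c` the only child of `u`; phylogeny then makes `u` hybrid. The
only child of a vertex `u` is never hybrid: by (PCC) a second parent would be comparable with `u`,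
closing a cycle or creating a shortcut. So `c` cannot be hybrid, and the first argument applied to
`c ⪰ v` forces `c = v`. A cluster strictly between the ends of an arc would belong to a vertex on a
second path along that arc, a shortcut.

Conversely, in a cluster network a shortcut `(u, w)` past a child `v` of `u` would give
`C(w) ⊊ C(v) ⊊ C(u)`, and equality of clusters along an arc is only allowed below a hybrid,
which excludes tree vertices with a single child. -/

namespace Network

variable {N : Network X}

lemma not_E_self (v : N.V) : ¬ N.E v v := fun h => N.acyclic v v h .refl

lemma reach_antisymm {u v : N.V} (huv : N.reach u v) (hvu : N.reach v u) : u = v := by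
  rcases huv.cases_head with rfl | ⟨c, huc, hcv⟩
  · rfl
  · exact absurd (hcv.trans hvu) (N.acyclic u c huc)

lemma cluster_subset_of_reach {u v : N.V} (h : N.reach u v) : N.cluster v ⊆ N.cluster u :=
  fun _ hx => h.trans hx

lemma cluster_subset_of_E {u v : N.V} (h : N.E u v) : N.cluster v ⊆ N.cluster u :=
  cluster_subset_of_reach (.single h)

lemma cluster_eq_of_unique_child {v u : N.V} (hu : N.E v u) (huniq : ∀ w, N.E v w → w = u) :
    N.cluster v = N.cluster u := by
  refine Set.Subset.antisymm ?_ (cluster_subset_of_E hu)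
  intro x hx
  rcases hx.cases_head with hleaf | ⟨c, hvc, hcx⟩
  · exact absurd hu ((N.leaf_iff v).2 ⟨x, hleaf.symm⟩ u)
  · exact huniq c hvc ▸ hcx

lemma outDeg_eq_one_iff {v : N.V} :
    N.outDeg v = 1 ↔ ∃ u, N.E v u ∧ ∀ w, N.E v w → w = u := by
  simp only [outDeg, Set.ncard_eq_one, Set.eq_singleton_iff_unique_mem, Set.mem_ofPred_eq]

lemma isHybrid_iff {v : N.V} : N.IsHybrid v ↔ ∃ p q, N.E p v ∧ N.E q v ∧ p ≠ q :=
  Set.one_lt_ncard_iff (Set.toFinite _)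

lemma isTreeVertex_iff_not_isHybrid {v : N.V} : N.IsTreeVertex v ↔ ¬ N.IsHybrid v :=
  not_lt.symm

lemma ShortcutFree.eq_of_reach (hSF : N.ShortcutFree) {u v w : N.V} (hv : N.E u v)
    (hw : N.E u w) (hvw : N.reach v w) : v = w :=
  not_not.1 fun hne => hSF u w ⟨hw, v, hv, hne, hvw⟩

lemma ShortcutFree.eq_or_eq_of_reach_of_reach (hSF : N.ShortcutFree) {u v w : N.V}
    (huv : N.E u v) (huw : N.reach u w) (hwv : N.reach w v) : w = u ∨ w = v := by
  rcases huw.cases_head with rfl | ⟨c, huc, hcw⟩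
  · exact Or.inl rfl
  · obtain rfl := hSF.eq_of_reach huc huv (hcw.trans hwv)
    exact Or.inr (reach_antisymm hwv hcw)

lemma PCC.reach_or_reach_of_cluster_eq (hPCC : N.PCC) {u v : N.V}
    (h : N.cluster u = N.cluster v) : N.reach u v ∨ N.reach v u :=
  (hPCC u v).2 (Or.inl h.subset)

lemma PCC.reach_of_cluster_ssubset (hPCC : N.PCC) {u v : N.V}
    (h : N.cluster v ⊂ N.cluster u) : N.reach u v := by
  rcases (hPCC u v).2 (Or.inr h.subset) with huv | hvu
  · exact huv
  · exact absurd (cluster_subset_of_reach hvu) (LT.lt.not_superset h)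

lemma Phylogenetic.isHybrid_of_unique_child (hPhy : N.Phylogenetic) {v u : N.V}
    (hu : N.E v u) (huniq : ∀ w, N.E v w → w = u) : N.IsHybrid v :=
  lt_of_not_ge fun hle => hPhy ⟨v, outDeg_eq_one_iff.2 ⟨u, hu, huniq⟩, hle⟩

lemma Separated.cluster_eq_of_E (hSep : N.Separated) {v u : N.V} (hv : N.IsHybrid v)
    (hvu : N.E v u) : N.cluster v = N.cluster u := by
  obtain ⟨c, hvc, huniq⟩ := outDeg_eq_one_iff.1 (hSep v hv)
  exact huniq u hvu ▸ cluster_eq_of_unique_child hvc huniq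

lemma isTreeVertex_of_unique_child (hSF : N.ShortcutFree) (hPCC : N.PCC) {v u : N.V}
    (hu : N.E v u) (huniq : ∀ w, N.E v w → w = u) : N.IsTreeVertex u := by
  rw [isTreeVertex_iff_not_isHybrid, isHybrid_iff]
  rintro ⟨p, q, hp, hq, hpq⟩
  obtain ⟨r, hr, hrv⟩ : ∃ r, N.E r u ∧ r ≠ v := by
    by_cases hpv : p = v
    · exact ⟨q, hq, hpv ▸ hpq.symm⟩
    · exact ⟨p, hp, hpv⟩
  have hvr : N.cluster v ⊆ N.cluster r :=
    cluster_eq_of_unique_child hu huniq ▸ cluster_subset_of_E hr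
  rcases (hPCC v r).2 (Or.inl hvr) with hvr | hrv'
  · rcases hvr.cases_head with rfl | ⟨c, hvc, hcr⟩
    · exact hrv rfl
    · exact N.acyclic r u hr (huniq c hvc ▸ hcr)
  · rcases hrv'.cases_head with rfl | ⟨c, hrc, hcv⟩
    · exact hrv rfl
    · obtain rfl := hSF.eq_of_reach hrc hr (hcv.tail hu)
      exact N.acyclic v c hu hcv

lemma exists_unique_child_of_cluster_eq (hSF : N.ShortcutFree) (hPCC : N.PCC) {u v : N.V}
    (huv : N.reach u v) (hne : u ≠ v) (hc : N.cluster u = N.cluster v) :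
    ∃ c, N.E u c ∧ (∀ w, N.E u w → w = c) ∧ N.reach c v := by
  rcases huv.cases_head with rfl | ⟨c, huc, hcv⟩
  · exact absurd rfl hne
  refine ⟨c, huc, fun w huw => ?_, hcv⟩
  have hwc : N.cluster w ⊆ N.cluster c :=
    calc N.cluster w ⊆ N.cluster u := cluster_subset_of_E huw
      _ = N.cluster v := hc
      _ ⊆ N.cluster c := cluster_subset_of_reach hcv
  rcases (hPCC w c).2 (Or.inl hwc) with hwc | hcw
  · exact hSF.eq_of_reach huw huc hwc
  · exact (hSF.eq_of_reach huc huw hcw).symm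

lemma isHybrid_and_E_of_cluster_eq (hSF : N.ShortcutFree) (hPCC : N.PCC)
    (hPhy : N.Phylogenetic) {u v : N.V} (huv : N.reach u v) (hne : u ≠ v)
    (hc : N.cluster u = N.cluster v) : N.IsHybrid u ∧ N.E u v := by
  obtain ⟨c, huc, huniq, hcv⟩ := exists_unique_child_of_cluster_eq hSF hPCC huv hne hc
  refine ⟨hPhy.isHybrid_of_unique_child huc huniq, ?_⟩
  obtain rfl | hcv_ne := eq_or_ne c v
  · exact huc
  have hcc : N.cluster c = N.cluster v := (cluster_eq_of_unique_child huc huniq).symm.trans hc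
  obtain ⟨d, hcd, hd, -⟩ := exists_unique_child_of_cluster_eq hSF hPCC hcv hcv_ne hcc
  exact absurd (hPhy.isHybrid_of_unique_child hcd hd)
    (isTreeVertex_iff_not_isHybrid.1 (isTreeVertex_of_unique_child hSF hPCC huc huniq))

lemma cluster_eq_iff (hSF : N.ShortcutFree) (hPCC : N.PCC) (hSep : N.Separated)
    (hPhy : N.Phylogenetic) (u v : N.V) :
    N.cluster u = N.cluster v ↔
      (u = v ∨ (N.IsHybrid v ∧ N.E v u) ∨ (N.IsHybrid u ∧ N.E u v)) := by
  constructor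
  · intro hc
    obtain rfl | hne := eq_or_ne u v
    · exact Or.inl rfl
    rcases hPCC.reach_or_reach_of_cluster_eq hc with huv | hvu
    · exact Or.inr (Or.inr (isHybrid_and_E_of_cluster_eq hSF hPCC hPhy huv hne hc))
    · exact Or.inr (Or.inl (isHybrid_and_E_of_cluster_eq hSF hPCC hPhy hvu hne.symm hc.symm))
  · rintro (rfl | ⟨hv, hvu⟩ | ⟨hu, huv⟩)
    · rfl
    · exact (hSep.cluster_eq_of_E hv hvu).symm
    · exact hSep.cluster_eq_of_E hu huv

lemma not_exists_cluster_between (hSF : N.ShortcutFree) (hPCC : N.PCC) {u v : N.V}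
    (hvu : N.E v u) :
    ¬ ∃ w, N.cluster u ⊂ N.cluster w ∧ N.cluster w ⊂ N.cluster v := by
  rintro ⟨w, huw, hwv⟩
  rcases hSF.eq_or_eq_of_reach_of_reach hvu (hPCC.reach_of_cluster_ssubset hwv)
      (hPCC.reach_of_cluster_ssubset huw) with rfl | rfl
  · exact hwv.ne rfl
  · exact huw.ne rfl

namespace ClusterNetwork

lemma separated (h : N.ClusterNetwork) : N.Separated := fun v hv =>
  let ⟨u, hu, huniq, _⟩ := h.2.2.2 v hv
  outDeg_eq_one_iff.2 ⟨u, hu, huniq⟩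

lemma phylogenetic (h : N.ClusterNetwork) : N.Phylogenetic := by
  rintro ⟨v, hout, hin⟩
  obtain ⟨u, hu, huniq⟩ := outDeg_eq_one_iff.1 hout
  rcases (h.2.1 v u).1 (cluster_eq_of_unique_child hu huniq) with rfl | ⟨-, huv⟩ | ⟨hv, -⟩
  · exact N.not_E_self v hu
  · exact N.acyclic v u hu (.single huv)
  · exact absurd hin (not_le_of_gt hv)

lemma shortcutFree (h : N.ClusterNetwork) : N.ShortcutFree := by
  rintro u w ⟨huw, v, huv, hvw, hreach⟩
  have huv_ne : u ≠ v := by rintro rfl; exact N.not_E_self u huv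
  have hwv : N.cluster w ≠ N.cluster v := by
    intro heq
    rcases (h.2.1 w v).1 heq with rfl | ⟨hv, hvw'⟩ | ⟨-, hEwv⟩
    · exact hvw rfl
    · obtain ⟨c, -, hc, htree⟩ := h.2.2.2 v hv
      exact isTreeVertex_iff_not_isHybrid.1 (hc w hvw' ▸ htree)
        (isHybrid_iff.2 ⟨u, v, huw, hvw', huv_ne⟩)
    · exact N.acyclic w v hEwv hreach
  have hvu : N.cluster v ≠ N.cluster u := by
    intro heq
    rcases (h.2.1 v u).1 heq with rfl | ⟨hu, -⟩ | ⟨-, hEvu⟩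
    · exact huv_ne rfl
    · obtain ⟨c, -, hc, -⟩ := h.2.2.2 u hu
      exact hvw ((hc v huv).trans (hc w huw).symm)
    · exact N.acyclic u v huv (.single hEvu)
  exact h.2.2.1 w u huw ⟨v, Set.ssubset_iff_subset_ne.2 ⟨cluster_subset_of_reach hreach, hwv⟩,
    Set.ssubset_iff_subset_ne.2 ⟨cluster_subset_of_E huv, hvu⟩⟩

end ClusterNetwork

end Network

theorem clusterNetwork_iff_semiRegular_separated_phylogenetic_general (X : Type)
    (N : Network X) :
    N.ClusterNetwork ↔ (N.SemiRegular ∧ N.Separated ∧ N.Phylogenetic) := by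
  refine ⟨fun h => ⟨⟨h.shortcutFree, h.1⟩, h.separated, h.phylogenetic⟩, ?_⟩
  rintro ⟨⟨hSF, hPCC⟩, hSep, hPhy⟩
  refine ⟨hPCC, Network.cluster_eq_iff hSF hPCC hSep hPhy,
    fun _ _ hvu => Network.not_exists_cluster_between hSF hPCC hvu, fun v hv => ?_⟩
  obtain ⟨u, hu, huniq⟩ := Network.outDeg_eq_one_iff.1 (hSep v hv)
  exact ⟨u, hu, huniq, Network.isTreeVertex_of_unique_child hSF hPCC hu huniq⟩

/-- A network is a cluster network iff it is semi-regular,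
separated, and phylogenetic. -/
theorem clusterNetwork_iff_semiRegular_separated_phylogenetic (X : Type)
    [Fintype X] (N : Network X) :
    N.ClusterNetwork ↔ (N.SemiRegular ∧ N.Separated ∧ N.Phylogenetic) :=
  clusterNetwork_iff_semiRegular_separated_phylogenetic_general X N

end PhyloNet
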